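/- Let x₁,...,x_n, y₁,...,y_n be indeterminates with indices mod n, and define P_j = Σ_{a=1}^{n} (Π_{k=1}^{a−1} y_{j+k})(Π_{k=a+1}^{n} x_{j+k}), x̄_j = x_j P_{j−1}/P_j, ȳ_j = y_j P_j/P_{j−1}. Then x̄_j ȳ_j = x_j y_j and x̄_j + ȳ_{j+1} = x_{j+1} + y_j for all j ∈ ℤ/nℤ. -/

import Mathlib

noncomputable section
open Finset

/-- The rational function field `ℂ(x₁,…,x_n,y₁,…,y_n)`. -/
abbrev K (n : ℕ) : Type := FractionRing (MvPolynomial (ZMod n × Fin 2) ℂ)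

def x (n : ℕ) (j : ZMod n) : K n :=
  algebraMap (MvPolynomial (ZMod n × Fin 2) ℂ) (K n) (MvPolynomial.X (j, 0))

def y (n : ℕ) (j : ZMod n) : K n :=
  algebraMap (MvPolynomial (ZMod n × Fin 2) ℂ) (K n) (MvPolynomial.X (j, 1))

/-- `P_j = Σ_{a=1}^{n} (Π_{k=1}^{a−1} y_{j+k})(Π_{k=a+1}^{n} x_{j+k})`. -/
def P (n : ℕ) (j : ZMod n) : K n :=
  ∑ a ∈ Icc 1 n, (∏ k ∈ Icc 1 (a - 1), y n (j + (k : ZMod n))) *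
    ∏ k ∈ Icc (a + 1) n, x n (j + (k : ZMod n))

/-- The discrete Toda evolution `x̄_j = x_j P_{j−1}/P_j`. -/
def xb (n : ℕ) (j : ZMod n) : K n := x n j * P n (j - 1) / P n j

/-- The discrete Toda evolution `ȳ_j = y_j P_j/P_{j−1}`. -/
def yb (n : ℕ) (j : ZMod n) : K n := y n j * P n j / P n (j - 1)

def A (n : ℕ) (j : ZMod n) (a : ℕ) : K n :=
  (∏ k ∈ Icc 1 (a - 1), y n (j + (k : ZMod n))) *
    ∏ k ∈ Icc (a + 1) n, x n (j + (k : ZMod n))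

lemma P_eq_sum_A (n : ℕ) (j : ZMod n) : P n j = ∑ a ∈ Icc 1 n, A n j a := rfl

lemma prod_shift {n : ℕ} (f : ZMod n → K n) (j : ZMod n) (b c : ℕ) :
    ∏ k ∈ Icc (b + 1) (c + 1), f (j + (k : ZMod n)) =
      ∏ k ∈ Icc b c, f ((j + 1) + (k : ZMod n)) := by
  rw [← map_add_right_Icc b c 1, prod_map]
  refine prod_congr rfl fun k _ => ?_
  congr 1
  simp [addRightEmbedding]
  ring

@[to_additive]
lemma prod_bot {M : Type*} [CommMonoid M] (f : ℕ → M) (b : ℕ) (h : 1 ≤ b) :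
    ∏ k ∈ Icc 1 b, f k = f 1 * ∏ k ∈ Icc 2 b, f k := by
  rw [Icc_eq_cons_Ioc h, prod_cons, ← Finset.Icc_add_one_left_eq_Ioc]
  rfl

@[to_additive]
lemma prod_sh {M : Type*} [CommMonoid M] (g : ℕ → M) (m : ℕ) :
    ∏ a ∈ Icc 2 (m + 1), g a = ∏ a ∈ Icc 1 m, g (a + 1) := by
  rw [← map_add_right_Icc 1 m 1, prod_map]
  rfl

lemma P_ne_zero (n : ℕ) (hn : 0 < n) (j : ZMod n) : P n j ≠ 0 := by
  have hP : P n j = algebraMap (MvPolynomial (ZMod n × Fin 2) ℂ) (K n)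
      (∑ a ∈ Icc 1 n, (∏ k ∈ Icc 1 (a - 1), MvPolynomial.X ((j + (k : ZMod n)), (1 : Fin 2))) *
        ∏ k ∈ Icc (a + 1) n, MvPolynomial.X ((j + (k : ZMod n)), (0 : Fin 2))) := by
    simp [P, x, y, map_sum, map_mul, map_prod]
  rw [hP, Ne, map_eq_zero_iff _ (IsFractionRing.injective _ _)]
  intro h
  have h2 := congrArg (MvPolynomial.aeval (fun _ => (1:ℂ))) h
  simp [map_sum, map_mul, map_prod, MvPolynomial.aeval_X, Nat.card_Icc] at h2
  exact absurd h2 (by simpa using hn.ne')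

lemma L1 {n : ℕ} (hn : 0 < n) (j : ZMod n) (a : ℕ) (ha1 : 1 ≤ a) (ha2 : a ≤ n - 1) :
    x n j * A n (j - 1) (a + 1) = y n j * A n j a := by
  obtain ⟨m, rfl⟩ : ∃ m, n = m + 1 := ⟨n - 1, by omega⟩
  unfold A
  simp only [Nat.add_sub_cancel]
  have hy : ∏ k ∈ Icc 1 a, y (m+1) ((j - 1) + (k : ZMod (m+1))) =
      y (m+1) j * ∏ k ∈ Icc 1 (a - 1), y (m+1) (j + (k : ZMod (m+1))) := by
    have h := prod_shift (y (m+1)) (j - 1) 0 (a - 1)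
    rw [Nat.sub_add_cancel ha1, show (0:ℕ) + 1 = 1 from rfl, sub_add_cancel] at h
    rw [h, Icc_eq_cons_Ioc (Nat.zero_le _), prod_cons, ← Finset.Icc_add_one_left_eq_Ioc]
    simp
  have hx : x (m+1) j * ∏ k ∈ Icc (a + 1 + 1) (m+1), x (m+1) ((j - 1) + (k : ZMod (m+1))) =
      ∏ k ∈ Icc (a + 1) (m+1), x (m+1) (j + (k : ZMod (m+1))) := by
    have hsh := prod_shift (x (m+1)) (j - 1) (a + 1) m
    rw [sub_add_cancel] at hsh
    rw [hsh, prod_Icc_succ_top (by omega), ZMod.natCast_self, add_zero, mul_comm]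
  rw [← hx, hy]
  ring

lemma L1b {n : ℕ} (hn : 0 < n) (j : ZMod n) :
    x n j * A n (j - 1) 1 = x n (j + 1) * A n j 1 := by
  obtain ⟨m, rfl⟩ : ∃ m, n = m + 1 := ⟨n - 1, by omega⟩
  unfold A
  rw [show (1:ℕ) - 1 = 0 from rfl, Icc_eq_empty (by omega)]
  simp only [prod_empty, one_mul]
  have h := prod_shift (x (m+1)) (j - 1) 1 m
  rw [sub_add_cancel] at h
  rw [h]
  have hL := prod_Icc_succ_top (show 1 ≤ m + 1 by omega)
    (fun k => x (m+1) (j + (k : ZMod (m+1))))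
  have hR := prod_bot (fun k => x (m+1) (j + (k : ZMod (m+1)))) (m+1) (by omega)
  simp only [ZMod.natCast_self, add_zero, Nat.cast_one] at hL hR
  rw [mul_comm (x (m+1) j), ← hL, hR]

lemma L2 {n : ℕ} (hn : 0 < n) (j : ZMod n) (a : ℕ) (ha1 : 1 ≤ a) (ha2 : a ≤ n - 1) :
    y n (j + 1) * A n (j + 1) a = x n (j + 1) * A n j (a + 1) := by
  obtain ⟨m, rfl⟩ : ∃ m, n = m + 1 := ⟨n - 1, by omega⟩
  unfold A
  simp only [Nat.add_sub_cancel]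
  have hy : y (m+1) (j + 1) * ∏ k ∈ Icc 1 (a - 1), y (m+1) ((j + 1) + (k : ZMod (m+1))) =
      ∏ k ∈ Icc 1 a, y (m+1) (j + (k : ZMod (m+1))) := by
    have h := prod_shift (y (m+1)) j 1 (a - 1)
    rw [Nat.sub_add_cancel ha1] at h
    rw [← h]
    have hB := prod_bot (fun k => y (m+1) (j + (k : ZMod (m+1)))) a (by omega)
    simp only [Nat.cast_one] at hB
    rw [hB]
  have hx : ∏ k ∈ Icc (a + 1) (m+1), x (m+1) ((j + 1) + (k : ZMod (m+1))) =
      (∏ k ∈ Icc (a + 1 + 1) (m+1), x (m+1) (j + (k : ZMod (m+1)))) * x (m+1) (j + 1) := by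
    have hsh := prod_shift (x (m+1)) j (a + 1) (m + 1)
    rw [← hsh, prod_Icc_succ_top (by omega)]
    congr 1
    have : ((m + 1 + 1 : ℕ) : ZMod (m+1)) = ((m + 1 : ℕ) : ZMod (m+1)) + 1 := by push_cast; ring
    rw [this, ZMod.natCast_self, zero_add]
  rw [hx, ← hy]
  ring

lemma L2b {n : ℕ} (hn : 0 < n) (j : ZMod n) :
    y n (j + 1) * A n (j + 1) n = y n j * A n j n := by
  obtain ⟨m, rfl⟩ : ∃ m, n = m + 1 := ⟨n - 1, by omega⟩
  unfold A
  rw [Icc_eq_empty (by omega : ¬ (m + 1 + 1 ≤ m + 1))]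
  simp only [prod_empty, mul_one, Nat.add_sub_cancel]
  have h := prod_shift (y (m+1)) j 1 m
  norm_num at h
  have hB := prod_bot (fun k => y (m+1) (j + (k : ZMod (m+1)))) (m+1) (by omega)
  simp only [Nat.cast_one] at hB
  have hT := prod_Icc_succ_top (show 1 ≤ m + 1 by omega)
    (fun k => y (m+1) (j + (k : ZMod (m+1))))
  simp only [ZMod.natCast_self, add_zero] at hT
  rw [← h, ← hB, hT, mul_comm]

lemma key {n : ℕ} (hn : 0 < n) (j : ZMod n) :
    x n j * P n (j - 1) + y n (j + 1) * P n (j + 1) = (x n (j + 1) + y n j) * P n j := by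
  obtain ⟨m, rfl⟩ : ∃ m, n = m + 1 := ⟨n - 1, by omega⟩
  have e1 : x (m+1) j * P (m+1) (j - 1) =
      x (m+1) (j + 1) * A (m+1) j 1 + y (m+1) j * ∑ a ∈ Icc 1 m, A (m+1) j a := by
    rw [P_eq_sum_A, mul_sum,
      sum_bot (fun a => x (m+1) j * A (m+1) (j - 1) a) (m+1) (by omega),
      sum_sh (fun a => x (m+1) j * A (m+1) (j - 1) a) m, L1b hn j, mul_sum]
    congr 1
    refine sum_congr rfl fun a ha => ?_
    rw [mem_Icc] at ha
    exact L1 hn j a ha.1 (by omega)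
  have e2 : y (m+1) (j + 1) * P (m+1) (j + 1) =
      x (m+1) (j + 1) * ∑ a ∈ Icc 2 (m+1), A (m+1) j a + y (m+1) j * A (m+1) j (m+1) := by
    rw [P_eq_sum_A, mul_sum,
      sum_Icc_succ_top (show 1 ≤ m + 1 by omega)
        (fun a => y (m+1) (j + 1) * A (m+1) (j + 1) a),
      L2b hn j, sum_sh (fun a => A (m+1) j a) m, mul_sum]
    congr 1
    refine sum_congr rfl fun a ha => ?_
    rw [mem_Icc] at ha
    exact L2 hn j a ha.1 (by omega)
  have s1 : P (m+1) j = A (m+1) j 1 + ∑ a ∈ Icc 2 (m+1), A (m+1) j a := by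
    rw [P_eq_sum_A]
    exact sum_bot (fun a => A (m+1) j a) (m+1) (by omega)
  have s2 : P (m+1) j = (∑ a ∈ Icc 1 m, A (m+1) j a) + A (m+1) j (m+1) := by
    rw [P_eq_sum_A]
    exact sum_Icc_succ_top (show 1 ≤ m + 1 by omega) (fun a => A (m+1) j a)
  rw [e1, e2]
  linear_combination (-(x (m+1) (j + 1))) * s1 - (y (m+1) j) * s2

/-- `x̄_j ȳ_j = x_j y_j` and `x̄_j + ȳ_{j+1} = x_{j+1} + y_j`. -/
theorem stmt10 (n : ℕ) (hn : 0 < n) :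
    ∀ j : ZMod n,
      xb n j * yb n j = x n j * y n j ∧
      xb n j + yb n (j + 1) = x n (j + 1) + y n j := by
  intro j
  have h0 := P_ne_zero n hn j
  have h1 := P_ne_zero n hn (j - 1)
  constructor
  · simp only [xb, yb]
    rw [div_mul_div_comm,
      show x n j * P n (j - 1) * (y n j * P n j) =
        (x n j * y n j) * (P n j * P n (j - 1)) by ring,
      mul_div_assoc, div_self (mul_ne_zero h0 h1), mul_one]
  · simp only [xb, yb, add_sub_cancel_right]
    rw [← add_div, key hn j, mul_div_assoc, div_self h0, mul_one]
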